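/- arXiv:2101.08390 — 2 statements merged into one kernel-verified Lean document; each statement's English description precedes it below -/
import Mathlib

section
/- For any two probability measures p and q that are mutually absolutely continuous, the Jensen-Shannon divergence satisfies Lin's inequality: D_JS(p||q) ≤ (1/4)(D_KL(p||q) + D_KL(q||p)). -/
open MeasureTheory ProbabilityTheory Real
open scoped ENNReal NNReal Classical

/-- Kullback-Leibler divergence, extended-real-valued: `⊤` unless `p ≪ q` and the
log-likelihood ratio is `p`-integrable. -/
noncomputable def klDivE {Ω : Type*} [MeasurableSpace Ω] (p q : Measure Ω) : EReal :=
  if p ≪ q ∧ Integrable (fun ω => Real.log ((p.rnDeriv q) ω).toReal) p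
  then ((∫ ω, Real.log ((p.rnDeriv q) ω).toReal ∂p : ℝ) : EReal)
  else ⊤

/-- The mixture `(p + q)/2`. -/
noncomputable def mix {Ω : Type*} [MeasurableSpace Ω] (p q : Measure Ω) : Measure Ω :=
  (1/2 : ℝ≥0∞) • (p + q)

/-- Jensen-Shannon divergence. -/
noncomputable def jsDivE {Ω : Type*} [MeasurableSpace Ω] (p q : Measure Ω) : EReal :=
  (1/2 : EReal) * (klDivE p (mix p q) + klDivE q (mix p q))

/-!
With `r = dp/dq`, the density of `p` against the mixture `(p + q)/2` is `2r/(r + 1)`, and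
`2r/(r + 1) ≤ √r` is AM-GM in the form `2√r ≤ r + 1`. Taking logarithms and integrating against `p`
gives `KL(p ‖ (p + q)/2) ≤ KL(p ‖ q)/2`; adding the same bound with `p` and `q` exchanged and
halving yields the theorem.
-/

namespace Real

lemma two_mul_div_add_one_le_sqrt {r : ℝ} (hr : 0 ≤ r) : 2 * r / (r + 1) ≤ √r := by
  have hs : √r ^ 2 = r := sq_sqrt hr
  rw [div_le_iff₀ (by positivity)]
  nlinarith [mul_nonneg (sqrt_nonneg r) (sq_nonneg (√r - 1))]

lemma log_two_mul_div_add_one_le_half_log {r : ℝ} (hr : 0 < r) :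
    log (2 * r / (r + 1)) ≤ log r / 2 :=
  calc log (2 * r / (r + 1)) ≤ log √r :=
        log_le_log (by positivity) (two_mul_div_add_one_le_sqrt hr.le)
    _ = log r / 2 := log_sqrt hr.le

lemma neg_abs_log_le_log_two_mul_div_add_one {r : ℝ} (hr : 0 < r) :
    -|log r| ≤ log (2 * r / (r + 1)) := by
  rcases le_total r 1 with hr1 | hr1
  · have : r ≤ 2 * r / (r + 1) := by rw [le_div_iff₀ (by positivity)]; nlinarith
    linarith [neg_abs_le (log r), log_le_log hr this]
  · have : 1 ≤ 2 * r / (r + 1) := by rw [le_div_iff₀ (by positivity)]; linarith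
    linarith [abs_nonneg (log r), log_nonneg this]

end Real

section

variable {Ω : Type*} [MeasurableSpace Ω]

lemma mix_comm (p q : Measure Ω) : mix p q = mix q p := by
  rw [mix, mix, add_comm]

lemma absolutelyContinuous_mix_left (p q : Measure Ω) : p ≪ mix p q :=
  (Measure.AbsolutelyContinuous.rfl.add_right q).trans
    (Measure.absolutelyContinuous_smul (by norm_num))

variable {p q : Measure Ω} [SigmaFinite p] [SigmaFinite q]

lemma toReal_rnDeriv_mix_ae (hpq : p ≪ q) :
    ∀ᵐ ω ∂p, (p.rnDeriv (mix p q) ω).toReal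
      = 2 * (p.rnDeriv q ω).toReal / ((p.rnDeriv q ω).toReal + 1) := by
  have hscale : p.rnDeriv (mix p q) =ᵐ[p + q] (2 : ℝ≥0∞) • p.rnDeriv (p + q) := by
    simpa [mix] using Measure.rnDeriv_smul_right_of_ne_top' p (p + q)
      (r := (1/2 : ℝ≥0∞)) (by norm_num) (by norm_num)
  filter_upwards [Measure.AbsolutelyContinuous.rfl.add_right q hscale,
    hpq (Measure.rnDeriv_self_add p q), hpq (p.rnDeriv_lt_top q)] with ω h1 h2 h3
  rw [h1, Pi.smul_apply, h2, smul_eq_mul, ENNReal.toReal_mul, ENNReal.toReal_div,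
    ENNReal.toReal_add h3.ne ENNReal.one_ne_top]
  simp [mul_div_assoc]

lemma klDivE_mix_le_half : klDivE p (mix p q) ≤ klDivE p q / 2 := by
  by_cases h : p ≪ q ∧ Integrable (fun ω => log (p.rnDeriv q ω).toReal) p
  swap
  · rw [show klDivE p q = ⊤ from if_neg h,
      EReal.top_div_of_pos_ne_top (by norm_num) (by exact EReal.coe_ne_top 2)]
    exact le_top
  obtain ⟨hpq, hint⟩ := h
  have hpos : ∀ᵐ ω ∂p, 0 < (p.rnDeriv q ω).toReal := by
    filter_upwards [Measure.rnDeriv_pos hpq, hpq (p.rnDeriv_lt_top q)] with ω h0 htop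
    exact ENNReal.toReal_pos h0.ne' htop.ne
  have hupper : ∀ᵐ ω ∂p,
      log (p.rnDeriv (mix p q) ω).toReal ≤ log (p.rnDeriv q ω).toReal / 2 := by
    filter_upwards [toReal_rnDeriv_mix_ae hpq, hpos] with ω h hr
    exact h ▸ log_two_mul_div_add_one_le_half_log hr
  have hlower : ∀ᵐ ω ∂p,
      -|log (p.rnDeriv q ω).toReal| ≤ log (p.rnDeriv (mix p q) ω).toReal := by
    filter_upwards [toReal_rnDeriv_mix_ae hpq, hpos] with ω h hr
    exact h ▸ neg_abs_log_le_log_two_mul_div_add_one hr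
  have hint_mix : Integrable (fun ω => log (p.rnDeriv (mix p q) ω).toReal) p :=
    integrable_of_le_of_le (p.measurable_rnDeriv _).ennreal_toReal.log.aestronglyMeasurable
      hlower hupper hint.abs.neg (hint.div_const 2)
  rw [klDivE, if_pos ⟨absolutelyContinuous_mix_left p q, hint_mix⟩, klDivE, if_pos ⟨hpq, hint⟩]
  refine (EReal.coe_le_coe_iff.2 ?_).trans_eq (EReal.coe_div _ 2)
  rw [← integral_div]
  exact integral_mono_ae hint_mix (hint.div_const 2) hupper

end

theorem js_le_quarter_sym_kl_general {Ω : Type*} [MeasurableSpace Ω] (p q : Measure Ω)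
    [IsProbabilityMeasure p] [IsProbabilityMeasure q] :
    jsDivE p q ≤ (klDivE p q + klDivE q p) / 4 := by
  have hp : klDivE p (mix p q) ≤ klDivE p q / 2 := klDivE_mix_le_half
  have hq : klDivE q (mix p q) ≤ klDivE q p / 2 := mix_comm q p ▸ klDivE_mix_le_half
  calc jsDivE p q = (klDivE p (mix p q) + klDivE q (mix p q)) / 2 := by
        rw [jsDivE, mul_comm, one_div]; rfl
    _ ≤ (klDivE p q / 2 + klDivE q p / 2) / 2 :=
        EReal.div_le_div_right_of_nonneg (by norm_num) (add_le_add hp hq)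
    _ = (klDivE p q + klDivE q p) / 4 := by
        rw [← EReal.add_div_of_nonneg_right (by norm_num), EReal.div_div]; norm_cast

/-- Lin's inequality. -/
theorem js_le_quarter_sym_kl {Ω : Type*} [MeasurableSpace Ω] (p q : Measure Ω)
    [IsProbabilityMeasure p] [IsProbabilityMeasure q] (hpq : p ≪ q) (hqp : q ≪ p) :
    jsDivE p q ≤ (klDivE p q + klDivE q p) / 4 :=
  js_le_quarter_sym_kl_general p q
end

section
/- If a real-valued random variable X satisfies a ≤ X ≤ b almost surely for scalars a ≤ b, then X is σ²-sub-Gaussian with σ² = (b-a)²/4, i.e., E[exp(λ(X - E[X]))] ≤ exp(λ²(b-a)²/8) for all real λ. -/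
open MeasureTheory ProbabilityTheory Real

theorem bounded_subGaussian_general {Ω : Type*} [MeasurableSpace Ω] (μ : Measure Ω)
    [IsProbabilityMeasure μ] (X : Ω → ℝ) (hX : Measurable X) (a b : ℝ)
    (hbdd : ∀ᵐ ω ∂μ, a ≤ X ω ∧ X ω ≤ b) :
    ∀ l : ℝ, ∫ ω, Real.exp (l * (X ω - ∫ ω', X ω' ∂μ)) ∂μ
      ≤ Real.exp (l ^ 2 * (b - a) ^ 2 / 8) := by
  intro l
  have hoeffding := (hasSubgaussianMGF_of_mem_Icc hX.aemeasurable hbdd).mgf_le l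
  have hvar : (((‖b - a‖₊ / 2) ^ 2 : NNReal) : ℝ) = (b - a) ^ 2 / 4 := by
    norm_num [div_pow, sq_abs]
  rw [mgf, hvar] at hoeffding
  calc ∫ ω, exp (l * (X ω - ∫ ω', X ω' ∂μ)) ∂μ
      ≤ exp ((b - a) ^ 2 / 4 * l ^ 2 / 2) := hoeffding
    _ = exp (l ^ 2 * (b - a) ^ 2 / 8) := by ring_nf

/-- Hoeffding's lemma: a random variable bounded in `[a, b]` almost surely is
`(b-a)²/4`-sub-Gaussian. -/
theorem bounded_subGaussian {Ω : Type*} [MeasurableSpace Ω] (μ : Measure Ω)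
    [IsProbabilityMeasure μ] (X : Ω → ℝ) (hX : Measurable X) (a b : ℝ) (hab : a ≤ b)
    (hbdd : ∀ᵐ ω ∂μ, a ≤ X ω ∧ X ω ≤ b) :
    ∀ l : ℝ, ∫ ω, Real.exp (l * (X ω - ∫ ω', X ω' ∂μ)) ∂μ
      ≤ Real.exp (l ^ 2 * (b - a) ^ 2 / 8) :=
  bounded_subGaussian_general μ X hX a b hbdd
end
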